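/- The image of α is given by range(α) = span_{ℤ/dℤ}{ f_1, …, f_{n−1} } + (ℤ/dℤ)·(N_1⋯N_n − 1) f_n, where f_i = e_i − N_i e_{i+1} for 1 ≤ i ≤ n−1 and f_n = e_n. -/

import Mathlib

/-! Modulo the span of the first `n - 1` relations `f i = e i - N i • e (i + 1)` we have
`e i ≡ N i • e (i + 1)`, so telescoping gives `e 0 ≡ (N 0 ⋯ N (n - 2)) • e (n - 1)`. Hence the
remaining generator `α (e (n - 1)) = e (n - 1) - N (n - 1) • e 0` of the range is congruent to
`(1 - ∏ i, N i) • e (n - 1)`, and may be replaced by it. -/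

open Finset in
theorem Submodule.sub_prod_range_smul_mem {R M : Type*} [CommRing R] [AddCommGroup M]
    [Module R M] (P : Submodule R M) (v : ℕ → M) (c : ℕ → R) (m : ℕ)
    (h : ∀ j < m, v j - c j • v (j + 1) ∈ P) :
    v 0 - (∏ j ∈ range m, c j) • v m ∈ P := by
  induction m with
  | zero => simp
  | succ m ih =>
    have step := P.add_mem (ih fun j hj => h j (by omega))
      (P.smul_mem (∏ j ∈ range m, c j) (h m (by omega)))
    convert step using 1
    rw [prod_range_succ, mul_smul, smul_sub]
    abel

theorem Submodule.sup_span_singleton_eq_of_sub_mem {R M : Type*} [Ring R] [AddCommGroup M]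
    [Module R M] {P : Submodule R M} {x y : M} (h : x - y ∈ P) :
    P ⊔ span R {x} = P ⊔ span R {y} := by
  have key : ∀ {x y : M}, x - y ∈ P → P ⊔ span R {x} ≤ P ⊔ span R {y} := by
    intro x y h
    refine sup_le le_sup_left ((span_singleton_le_iff_mem _ _).2 ?_)
    simpa using add_mem (mem_sup_left h) (mem_sup_right (mem_span_singleton_self y))
  exact le_antisymm (key h) (key (by simpa using P.neg_mem h))

theorem LinearMap.range_eq_span_range_comp_basis {ι R M M' : Type*} [Semiring R]
    [AddCommMonoid M] [AddCommMonoid M'] [Module R M] [Module R M'] (b : Module.Basis ι R M)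
    (f : M →ₗ[R] M') : range f = Submodule.span R (Set.range (f ∘ b)) := by
  rw [range_eq_map, ← b.span_eq, Submodule.map_span, Set.range_comp]

theorem LinearMap.range_eq_span_insert_last {R M : Type*} [Semiring R] [AddCommMonoid M]
    [Module R M] {m : ℕ} (f : (Fin (m + 1) → R) →ₗ[R] M) :
    range f = Submodule.span R
      (insert (f (Pi.single (Fin.last m) 1))
        (Set.range fun i : Fin m => f (Pi.single i.castSucc 1))) := by
  rw [range_eq_span_range_comp_basis (Pi.basisFun R _) f]
  congr 1
  ext
  simp [Fin.exists_fin_succ', eq_comm, or_comm]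

open Fin.NatCast in
theorem Submodule.sub_prod_castSucc_smul_last_mem {R M : Type*} [CommRing R] [AddCommGroup M]
    [Module R M] {m : ℕ} (a : Fin (m + 1) → R) (e : Fin (m + 1) → M) {P : Submodule R M}
    (h : ∀ i : Fin (m + 1), (i : ℕ) < m → e i - a i • e (i + 1) ∈ P) :
    e 0 - (∏ i : Fin m, a i.castSucc) • e (Fin.last m) ∈ P := by
  have key := P.sub_prod_range_smul_mem (fun j : ℕ => e j) (fun j : ℕ => a j) m fun j hj => by
    simpa [Nat.cast_succ] using h j (by rwa [Fin.val_cast_of_lt (by omega)])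
  simp only [Nat.cast_zero, Fin.natCast_eq_last] at key
  rwa [← Fin.prod_univ_eq_prod_range, funext fun i : Fin m => congrArg a Fin.coe_eq_castSucc]
    at key

/-- Let `M = (ℤ/dℤ)^n` (with `n ≥ 1`) and let `α : M → M` be the `ℤ/dℤ`-linear map
determined on the standard basis by `α(e i) = e i - N i • e (i+1)` (indices mod `n`,
so that `α(e_n) = e_n - N_n e_1`).  Then the image of `α` is
`span{f_1, …, f_{n-1}} + (ℤ/dℤ)·(N_1 ⋯ N_n - 1) f_n`, where `f_i = e_i - N_i e_{i+1}`
for `1 ≤ i ≤ n-1` and `f_n = e_n`. -/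
theorem range_eq_span_f
    (n d : ℕ) [NeZero n] (N : Fin n → ℤ)
    (α : (Fin n → ZMod d) →ₗ[ZMod d] (Fin n → ZMod d))
    (hα : ∀ i : Fin n,
      α (Pi.single i 1) =
        (Pi.single i 1 : Fin n → ZMod d) -
          (N i : ZMod d) • (Pi.single (i + 1) 1 : Fin n → ZMod d)) :
    LinearMap.range α =
      Submodule.span (ZMod d)
        {x : Fin n → ZMod d | ∃ i : Fin n, (i : ℕ) < n - 1 ∧
          x = (Pi.single i 1 : Fin n → ZMod d) -
            (N i : ZMod d) • (Pi.single (i + 1) 1 : Fin n → ZMod d)}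
      ⊔ Submodule.span (ZMod d)
        {((((∏ i, N i) - 1 : ℤ) : ZMod d) •
          (Pi.single (⟨n - 1, by have := NeZero.pos n; omega⟩ : Fin n) 1 :
            Fin n → ZMod d))} := by
  obtain ⟨m, rfl⟩ := Nat.exists_eq_add_one_of_ne_zero (NeZero.ne n)
  set e : Fin (m + 1) → Fin (m + 1) → ZMod d := fun i => Pi.single i 1
  set P := Submodule.span (ZMod d) {x | ∃ i : Fin (m + 1), (i : ℕ) < m ∧
    x = e i - (N i : ZMod d) • e (i + 1)}
  have hP : P = Submodule.span (ZMod d) (Set.range fun i : Fin m => α (e i.castSucc)) := by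
    refine congrArg (Submodule.span (ZMod d)) (Set.ext fun x => ?_)
    constructor
    · rintro ⟨i, hi, rfl⟩
      exact ⟨⟨i, hi⟩, hα i⟩
    · rintro ⟨i, rfl⟩
      exact ⟨i.castSucc, i.isLt, hα _⟩
  have hlast : α (e (Fin.last m)) - (1 - ∏ i, (N i : ZMod d)) • e (Fin.last m) ∈ P := by
    convert P.smul_mem (-(N (Fin.last m) : ZMod d))
      (Submodule.sub_prod_castSucc_smul_last_mem (fun i => (N i : ZMod d)) e
        fun i hi => Submodule.subset_span ⟨i, hi, rfl⟩) using 1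
    rw [hα, Fin.prod_univ_castSucc, Fin.last_add_one]
    module
  calc LinearMap.range α
      = Submodule.span (ZMod d)
          (insert (α (e (Fin.last m))) (Set.range fun i : Fin m => α (e i.castSucc))) :=
        α.range_eq_span_insert_last
    _ = P ⊔ Submodule.span (ZMod d) {α (e (Fin.last m))} := by
        rw [Submodule.span_insert, sup_comm, hP]
    _ = P ⊔ Submodule.span (ZMod d) {(1 - ∏ i, (N i : ZMod d)) • e (Fin.last m)} :=
        Submodule.sup_span_singleton_eq_of_sub_mem hlast
    _ = _ := by
        rw [← neg_sub, neg_smul, ← Set.neg_singleton, Submodule.span_neg]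
        push_cast
        rfl
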